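/- arXiv:1708.08402 — 6 statements merged into one kernel-verified Lean document; each statement's English description precedes it below -/
import Mathlib

section
/- Let K/k be a finite Galois extension of fields of characteristic zero with Galois group G, let J ≤ G, and let F = K^J be the fixed field. If σ₁, ..., σ_r ∈ G satisfy σ₁(x) + ... + σ_r(x) = r·x for all x ∈ F, then each σ_i lies in J. -/
/-- Dedekind's lemma: the coefficient of the character `f i` in `∑ j, f j - r • ψ` counts the
indices `j` with `f j = f i`, a positive integer unless `f i = ψ`. -/
theorem MonoidHom.eq_of_sum_apply_eq_card_mul {M L ι : Type*} [MulOneClass M] [CommRing L]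
    [IsDomain L] [CharZero L] [Fintype ι] (f : ι → M →* L) (ψ : M →* L)
    (h : ∀ x, ∑ j, f j x = Fintype.card ι * ψ x) (i : ι) : f i = ψ := by
  classical
  by_contra hne
  set c : (M →* L) →₀ L :=
    ∑ j, Finsupp.single (f j) 1 - Finsupp.single ψ (Fintype.card ι : L)
  have hc : Finsupp.linearCombination L (fun χ : M →* L => (χ : M → L)) c = 0 := by
    funext x
    simp [c, map_sub, map_sum, Finsupp.linearCombination_single, h]
  have hc0 : c = 0 := linearIndependent_iff.mp (linearIndependent_monoidHom M L) c hc
  have hcoeff := congrArg (· (f i)) hc0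
  simp only [c, Finsupp.sub_apply, Finsupp.finsetSum_apply, Finsupp.single_apply,
    Finset.sum_boole, if_neg (Ne.symm hne), sub_zero, Finsupp.coe_zero, Pi.zero_apply,
    Nat.cast_eq_zero, Finset.card_eq_zero] at hcoeff
  exact Finset.notMem_empty i (hcoeff ▸ Finset.mem_filter.mpr ⟨Finset.mem_univ i, rfl⟩)

theorem stmt_0_general {k K : Type*} [Field k] [Field K] [CharZero k] [Algebra k K]
    [FiniteDimensional k K]
    (J : Subgroup (K ≃ₐ[k] K)) (r : ℕ) (σ : Fin r → (K ≃ₐ[k] K))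
    (h : ∀ x ∈ IntermediateField.fixedField J, ∑ i, σ i x = (r : K) * x) :
    ∀ i, σ i ∈ J := by
  have : CharZero K := charZero_of_injective_algebraMap (algebraMap k K).injective
  set F := IntermediateField.fixedField J
  intro i
  have hσ := MonoidHom.eq_of_sum_apply_eq_card_mul
    (fun j => ((σ j : K →+* K).comp (algebraMap F K)).toMonoidHom)
    (algebraMap F K).toMonoidHom (by simpa using fun x : F => h x x.2) i
  rw [← IntermediateField.fixingSubgroup_fixedField J]
  exact fun x => DFunLike.congr_fun hσ x

/-- If `K/k` is a finite Galois extension of characteristic-zero fields, `J` a subgroup of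
the Galois group, `F = K^J` the fixed field, and `σ₁,…,σ_r` elements of the Galois group
with `σ₁(x) + ⋯ + σ_r(x) = r·x` for all `x ∈ F`, then each `σ_i ∈ J`. -/
theorem stmt_0 {k K : Type*} [Field k] [Field K] [CharZero k] [Algebra k K]
    [FiniteDimensional k K] [IsGalois k K]
    (J : Subgroup (K ≃ₐ[k] K)) (r : ℕ) (σ : Fin r → (K ≃ₐ[k] K))
    (h : ∀ x ∈ IntermediateField.fixedField J, ∑ i, σ i x = (r : K) * x) :
    ∀ i, σ i ∈ J :=
  stmt_0_general J r σ h
end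

section
/- Let G be a finite group, λ : G → Perm(G) its left regular representation, and let P ≤ Perm(G) be a semi-regular (fixed-point free) subgroup normalized by λ(G). Then J = {q(1_G) : q ∈ P} is a subgroup of G of order |P|. -/
/-! Semiregularity makes `q ↦ q 1` injective on `P`, so its image has `|P|` elements. The image is
closed under products and inverses because, for `q, q' ∈ P` and `a = q 1`,
`(λ(a) q' λ(a)⁻¹ q) 1 = a * q' 1` and `(λ(a⁻¹) q⁻¹ λ(a)) 1 = a⁻¹`. -/

open Equiv

theorem Subgroup.injOn_apply_of_fixedPointFree {α : Type*} {P : Subgroup (Perm α)}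
    (hfree : ∀ q ∈ P, ∀ x : α, q x = x → q = 1) (x : α) :
    Set.InjOn (fun q : Perm α => q x) P := by
  intro q hq q' hq' hqx
  have hfix : (q'⁻¹ * q) x = x := by
    simpa [Perm.mul_apply] using congrArg (⇑q'⁻¹) hqx
  exact (inv_mul_eq_one.mp (hfree _ (mul_mem (inv_mem hq') hq) x hfix)).symm

def Subgroup.orbitOneOfNormalizedByMulLeft {G : Type*} [Group G] (P : Subgroup (Perm G))
    (hP : ∀ g : G, ∀ q ∈ P, Equiv.mulLeft g * q * (Equiv.mulLeft g)⁻¹ ∈ P) : Subgroup G where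
  carrier := (fun q : Perm G => q 1) '' P
  one_mem' := ⟨1, P.one_mem, rfl⟩
  mul_mem' := by
    rintro _ _ ⟨q, hq, rfl⟩ ⟨q', hq', rfl⟩
    exact ⟨Equiv.mulLeft (q 1) * q' * (Equiv.mulLeft (q 1))⁻¹ * q,
      mul_mem (hP _ q' hq') hq, by simp⟩
  inv_mem' := by
    rintro _ ⟨q, hq, rfl⟩
    exact ⟨Equiv.mulLeft (q 1)⁻¹ * q⁻¹ * (Equiv.mulLeft (q 1)⁻¹)⁻¹,
      hP _ q⁻¹ (inv_mem hq), by simp⟩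

theorem stmt_3_general {G : Type*} [Group G] (P : Subgroup (Equiv.Perm G))
    (hfree : ∀ q ∈ P, ∀ x : G, q x = x → q = 1)
    (hP : ∀ g : G, ∀ q ∈ P, Equiv.mulLeft g * q * (Equiv.mulLeft g)⁻¹ ∈ P) :
    ∃ J : Subgroup G,
      (J : Set G) = (fun q : Equiv.Perm G => q 1) '' (P : Set (Equiv.Perm G)) ∧
      Nat.card J = Nat.card P :=
  ⟨Subgroup.orbitOneOfNormalizedByMulLeft P hP, rfl,
    Nat.card_image_of_injOn (Subgroup.injOn_apply_of_fixedPointFree hfree 1)⟩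

/-- If `P ≤ Perm(G)` is semi-regular (fixed-point free) and normalized by `λ(G)`, then
`J = {q(1) : q ∈ P}` is a subgroup of `G` of order `|P|`. -/
theorem stmt_3 {G : Type*} [Group G] [Finite G] (P : Subgroup (Equiv.Perm G))
    (hfree : ∀ q ∈ P, ∀ x : G, q x = x → q = 1)
    (hP : ∀ g : G, ∀ q ∈ P, Equiv.mulLeft g * q * (Equiv.mulLeft g)⁻¹ ∈ P) :
    ∃ J : Subgroup G,
      (J : Set G) = (fun q : Equiv.Perm G => q 1) '' (P : Set (Equiv.Perm G)) ∧
      Nat.card J = Nat.card P :=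
  stmt_3_general P hfree hP
end

section
/- Let G be a finite group, λ : G → Perm(G) the left regular representation. The map Ψ sending a subgroup P of Perm(G) normalized by λ(G) to the orbit Orb_P(1_G) = {q(1_G) : q ∈ P} is injective on the set of subgroups of a fixed regular subgroup N ≤ Perm(G) normalized by λ(G): if P₁, P₂ ≤ N are both normalized by λ(G) and Orb_{P₁}(1_G) = Orb_{P₂}(1_G), then P₁ = P₂. -/
namespace Equiv.Perm

variable {α : Type*} {N : Subgroup (Perm α)}

theorem eq_of_apply_eq_of_free (hfree : ∀ n ∈ N, ∀ x : α, n x = x → n = 1)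
    {p q : Perm α} (hp : p ∈ N) (hq : q ∈ N) {a : α} (h : p a = q a) : p = q := by
  have hfix : (q⁻¹ * p) a = a := by
    rw [mul_apply, inv_eq_iff_eq, h]
  exact (inv_mul_eq_one.mp (hfree _ (N.mul_mem (N.inv_mem hq) hp) a hfix)).symm

theorem le_of_image_apply_subset_of_free (hfree : ∀ n ∈ N, ∀ x : α, n x = x → n = 1)
    {P₁ P₂ : Subgroup (Perm α)} (hP₁N : P₁ ≤ N) (hP₂N : P₂ ≤ N) {a : α}
    (horb : (fun q : Perm α => q a) '' (P₁ : Set (Perm α)) ⊆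
      (fun q : Perm α => q a) '' (P₂ : Set (Perm α))) :
    P₁ ≤ P₂ := by
  intro p hp
  obtain ⟨q, hq, hqa⟩ := horb ⟨p, hp, rfl⟩
  rwa [← eq_of_apply_eq_of_free hfree (hP₂N hq) (hP₁N hp) hqa]

end Equiv.Perm

theorem stmt_4_general {G : Type*} [Group G] (N : Subgroup (Equiv.Perm G))
    (hfree : ∀ n ∈ N, ∀ x : G, n x = x → n = 1)
    (P₁ P₂ : Subgroup (Equiv.Perm G)) (hP₁N : P₁ ≤ N) (hP₂N : P₂ ≤ N)
    (horb : (fun q : Equiv.Perm G => q 1) '' (P₁ : Set (Equiv.Perm G)) =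
            (fun q : Equiv.Perm G => q 1) '' (P₂ : Set (Equiv.Perm G))) :
    P₁ = P₂ :=
  le_antisymm
    (Equiv.Perm.le_of_image_apply_subset_of_free hfree hP₁N hP₂N horb.subset)
    (Equiv.Perm.le_of_image_apply_subset_of_free hfree hP₂N hP₁N horb.symm.subset)

/-- The map `Ψ(P) = Orb_P(1)` is injective on subgroups of a fixed regular subgroup
`N ≤ Perm(G)` normalized by `λ(G)`, among those subgroups normalized by `λ(G)`. -/
theorem stmt_4 {G : Type*} [Group G] [Finite G] (N : Subgroup (Equiv.Perm G))
    (htrans : ∀ x y : G, ∃ n ∈ N, n x = y)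
    (hfree : ∀ n ∈ N, ∀ x : G, n x = x → n = 1)
    (hN : ∀ g : G, ∀ n ∈ N, Equiv.mulLeft g * n * (Equiv.mulLeft g)⁻¹ ∈ N)
    (P₁ P₂ : Subgroup (Equiv.Perm G)) (hP₁N : P₁ ≤ N) (hP₂N : P₂ ≤ N)
    (hP₁ : ∀ g : G, ∀ q ∈ P₁, Equiv.mulLeft g * q * (Equiv.mulLeft g)⁻¹ ∈ P₁)
    (hP₂ : ∀ g : G, ∀ q ∈ P₂, Equiv.mulLeft g * q * (Equiv.mulLeft g)⁻¹ ∈ P₂)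
    (horb : (fun q : Equiv.Perm G => q 1) '' (P₁ : Set (Equiv.Perm G)) =
            (fun q : Equiv.Perm G => q 1) '' (P₂ : Set (Equiv.Perm G))) :
    P₁ = P₂ :=
  stmt_4_general N hfree P₁ P₂ hP₁N hP₂N horb
end

section
/- Let G be a finite group, N ≤ Perm(G) a regular subgroup normalized by λ(G), and P ⊴ N normalized by λ(G) with J = Orb_P(1_G). Then the induced action of N on the set of left cosets {gJ : g ∈ G} factors through N/P, and N/P acts regularly (transitively and freely) on this set of cosets. -/
/-!
The `P`-orbit of `g` is the coset `g J`, because `λ(g)` normalizes `P` and so carries the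
`P`-orbit of `1` to that of `g`; likewise every `n ∈ N` normalizes `P` and carries the orbit of
`x` to that of `n x`. Hence `N` permutes the cosets transitively, since it is transitive on `G`,
and `P` acts trivially on them. If `n` fixes the coset of `x`, then `n x = q x` for some `q ∈ P`,
and freeness of `N` forces `n = q`.
-/

open MulAction

namespace Subgroup

variable {G : Type*} [Group G]

theorem mem_normalizer_of_conj_mem {H : Subgroup G} {g : G}
    (hg : ∀ h ∈ H, g * h * g⁻¹ ∈ H) (hg' : ∀ h ∈ H, g⁻¹ * h * g ∈ H) :
    g ∈ normalizer (H : Set G) :=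
  mem_normalizer_iff.2 fun h =>
    ⟨hg h, fun hh => by simpa [mul_assoc] using hg' _ hh⟩

end Subgroup

namespace Equiv.Perm

variable {α : Type*} (P : Subgroup (Perm α))

theorem image_apply_eq_orbit (a : α) :
    (fun q : Perm α => q a) '' (P : Set (Perm α)) = orbit P a := by
  ext b
  simp [mem_orbit_iff, Subgroup.smul_def, Perm.smul_def]

variable {P}

theorem image_orbit_of_mem_normalizer {σ : Perm α}
    (hσ : σ ∈ Subgroup.normalizer (P : Set (Perm α))) (a : α) :
    σ '' orbit P a = orbit P (σ a) := by
  rw [← image_apply_eq_orbit, ← image_apply_eq_orbit, Set.image_image]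
  ext b
  simp only [Set.mem_image, SetLike.mem_coe]
  constructor
  · rintro ⟨q, hq, rfl⟩
    exact ⟨σ * q * σ⁻¹, (Subgroup.mem_normalizer_iff.1 hσ q).1 hq, by simp⟩
  · rintro ⟨q, hq, rfl⟩
    refine ⟨σ⁻¹ * q * σ, (Subgroup.mem_normalizer_iff.1 (inv_mem hσ) q).1 hq, ?_⟩
    simp [mul_apply]

theorem image_orbit_eq_of_inv_mul_mem {n n' : Perm α} (h : n⁻¹ * n' ∈ P) (a : α) :
    n '' orbit P a = n' '' orbit P a := by
  obtain ⟨q, rfl⟩ : ∃ q : P, n' = n * q := ⟨⟨n⁻¹ * n', h⟩, by simp⟩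
  rw [coe_mul, Set.image_comp]
  congr 1
  conv_lhs => rw [← smul_orbit q a, ← Set.image_smul]
  rfl

theorem mem_of_apply_mem_orbit {N : Subgroup (Perm α)}
    (hfree : ∀ n ∈ N, ∀ x : α, n x = x → n = 1) (hPN : P ≤ N) {n : Perm α} (hn : n ∈ N)
    {a : α} (h : n a ∈ orbit P a) : n ∈ P := by
  obtain ⟨q, hq⟩ := mem_orbit_iff.1 h
  have hfix : ((q : Perm α)⁻¹ * n) a = a := by
    simp [mul_apply, ← hq, Subgroup.smul_def, Perm.smul_def]
  have hqn : (q : Perm α)⁻¹ * n = 1 := hfree _ (mul_mem (inv_mem (hPN q.2)) hn) a hfix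
  rw [inv_mul_eq_one] at hqn
  exact hqn ▸ q.2

theorem image_mulLeft_orbit_one {G : Type*} [Group G] {P : Subgroup (Perm G)} {g : G}
    (hg : Equiv.mulLeft g ∈ Subgroup.normalizer (P : Set (Perm G))) :
    (fun x => g * x) '' orbit P 1 = orbit P g := by
  simpa using image_orbit_of_mem_normalizer hg 1

end Equiv.Perm

open Equiv.Perm in
theorem stmt_7_general {G : Type*} [Group G] (N P : Subgroup (Equiv.Perm G))
    (htrans : ∀ x y : G, ∃ n ∈ N, n x = y)
    (hfree : ∀ n ∈ N, ∀ x : G, n x = x → n = 1)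
    (hPN : P ≤ N) (hnormal : ∀ n ∈ N, ∀ q ∈ P, n * q * n⁻¹ ∈ P)
    (hP : ∀ g : G, ∀ q ∈ P, Equiv.mulLeft g * q * (Equiv.mulLeft g)⁻¹ ∈ P) :
    (∀ n ∈ N, ∀ n' ∈ N, n⁻¹ * n' ∈ P →
      ∀ S ∈ {S : Set G | ∃ g : G, S = (fun x => g * x) ''
          ((fun q : Equiv.Perm G => q 1) '' (P : Set (Equiv.Perm G)))},
        (⇑n) '' S = (⇑n') '' S) ∧
    (∀ S ∈ {S : Set G | ∃ g : G, S = (fun x => g * x) ''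
          ((fun q : Equiv.Perm G => q 1) '' (P : Set (Equiv.Perm G)))},
      ∀ T ∈ {S : Set G | ∃ g : G, S = (fun x => g * x) ''
          ((fun q : Equiv.Perm G => q 1) '' (P : Set (Equiv.Perm G)))},
        ∃ n ∈ N, (⇑n) '' S = T) ∧
    (∀ n ∈ N, (∃ S ∈ {S : Set G | ∃ g : G, S = (fun x => g * x) ''
          ((fun q : Equiv.Perm G => q 1) '' (P : Set (Equiv.Perm G)))},
        (⇑n) '' S = S) → n ∈ P) := by
  have hmulLeft (g : G) : Equiv.mulLeft g ∈ Subgroup.normalizer (P : Set (Equiv.Perm G)) :=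
    Subgroup.mem_normalizer_of_conj_mem (hP g) (by simpa using hP g⁻¹)
  have hNP {n} (hn : n ∈ N) : n ∈ Subgroup.normalizer (P : Set (Equiv.Perm G)) :=
    Subgroup.mem_normalizer_of_conj_mem (hnormal n hn) (by simpa using hnormal n⁻¹ (inv_mem hn))
  have hcoset (g : G) : (fun x => g * x) '' ((fun q : Equiv.Perm G => q 1) '' (P : Set _)) =
      MulAction.orbit P g := by
    rw [image_apply_eq_orbit, image_mulLeft_orbit_one (hmulLeft g)]
  refine ⟨?_, ?_, ?_⟩
  · rintro n - n' - hnn' S ⟨g, rfl⟩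
    rw [hcoset]
    exact image_orbit_eq_of_inv_mul_mem hnn' g
  · rintro S ⟨g, rfl⟩ T ⟨g', rfl⟩
    obtain ⟨n, hn, rfl⟩ := htrans g g'
    exact ⟨n, hn, by rw [hcoset, hcoset, image_orbit_of_mem_normalizer (hNP hn)]⟩
  · rintro n hn ⟨S, ⟨g, rfl⟩, hS⟩
    rw [hcoset, image_orbit_of_mem_normalizer (hNP hn), MulAction.orbit_eq_iff] at hS
    exact mem_of_apply_mem_orbit hfree hPN hn hS

/-- With `N ≤ Perm(G)` regular normalized by `λ(G)` and `P ⊴ N` normalized by `λ(G)`,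
`J = Orb_P(1)`, the action of `N` on the set of left cosets of `J` factors through `N/P`
(elements in the same coset of `P` induce the same permutation of cosets), and the induced
action of `N/P` on the cosets is transitive and free. -/
theorem stmt_7 {G : Type*} [Group G] [Finite G] (N P : Subgroup (Equiv.Perm G))
    (htrans : ∀ x y : G, ∃ n ∈ N, n x = y)
    (hfree : ∀ n ∈ N, ∀ x : G, n x = x → n = 1)
    (hN : ∀ g : G, ∀ n ∈ N, Equiv.mulLeft g * n * (Equiv.mulLeft g)⁻¹ ∈ N)
    (hPN : P ≤ N) (hnormal : ∀ n ∈ N, ∀ q ∈ P, n * q * n⁻¹ ∈ P)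
    (hP : ∀ g : G, ∀ q ∈ P, Equiv.mulLeft g * q * (Equiv.mulLeft g)⁻¹ ∈ P) :
    (∀ n ∈ N, ∀ n' ∈ N, n⁻¹ * n' ∈ P →
      ∀ S ∈ {S : Set G | ∃ g : G, S = (fun x => g * x) ''
          ((fun q : Equiv.Perm G => q 1) '' (P : Set (Equiv.Perm G)))},
        (⇑n) '' S = (⇑n') '' S) ∧
    (∀ S ∈ {S : Set G | ∃ g : G, S = (fun x => g * x) ''
          ((fun q : Equiv.Perm G => q 1) '' (P : Set (Equiv.Perm G)))},
      ∀ T ∈ {S : Set G | ∃ g : G, S = (fun x => g * x) ''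
          ((fun q : Equiv.Perm G => q 1) '' (P : Set (Equiv.Perm G)))},
        ∃ n ∈ N, (⇑n) '' S = T) ∧
    (∀ n ∈ N, (∃ S ∈ {S : Set G | ∃ g : G, S = (fun x => g * x) ''
          ((fun q : Equiv.Perm G => q 1) '' (P : Set (Equiv.Perm G)))},
        (⇑n) '' S = S) → n ∈ P) :=
  stmt_7_general N P htrans hfree hPN hnormal hP
end

section
/- Let G be a finite group with normal subgroup J ⊴ G, let N ≤ Perm(G) be regular and normalized by λ(G), let P ⊴ N be normalized by λ(G) with Orb_P(1_G) = J. Then for all γ ∈ G, h₁, h₂ ∈ J, n ∈ N, and q ∈ P, the permutation λ(γh₁) ∘ n ∘ q ∘ λ(γ⁻¹h₂) sends each left coset g_iJ to the coset γ·n(γ⁻¹g_i)·J. -/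
/-!
Because `P` is normalized by `λ(G)`, its orbits are the left cosets `xJ`. A permutation
normalizing `P` maps `P`-orbits to `P`-orbits, so `n` sends `xJ` to `n(x)J` and `q ∈ P` fixes
every coset, while `λ(a)` sends `xJ` to `axJ`. Normality of `J` absorbs `h₁` and `h₂`.
-/

open Pointwise MulAction

namespace Equiv.Perm

variable {α : Type*}

lemma image_orbit_of_forall_conj_mem {N H : Subgroup (Perm α)}
    (hconj : ∀ n ∈ N, ∀ q ∈ H, n * q * n⁻¹ ∈ H) {m : Perm α} (hm : m ∈ N) (x : α) :
    ⇑m '' orbit H x = orbit H (m x) := by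
  ext y
  simp only [Set.mem_image, mem_orbit_iff, Subtype.exists, Subgroup.mk_smul]
  constructor
  · rintro ⟨_, ⟨p, hp, rfl⟩, rfl⟩
    exact ⟨m * p * m⁻¹, hconj m hm p hp, by simp⟩
  · rintro ⟨p, hp, rfl⟩
    have hconj' : m⁻¹ * p * m⁻¹⁻¹ ∈ H := hconj _ (inv_mem hm) p hp
    exact ⟨(m⁻¹ * p * m) x, ⟨_, hconj', by simp⟩, by simp⟩

lemma image_orbit_of_mem {H : Subgroup (Perm α)} {q : Perm α} (hq : q ∈ H) (x : α) :
    ⇑q '' orbit H x = orbit H x := by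
  rw [image_orbit_of_forall_conj_mem (fun n hn p hp ↦ mul_mem (mul_mem hn hp) (inv_mem hn)) hq]
  exact orbit_smul (⟨q, hq⟩ : H) x

end Equiv.Perm

section LeftCoset

variable {G : Type*} [Group G]

lemma image_mulLeft_leftCoset (a x : G) (s : Set G) :
    ⇑(Equiv.mulLeft a) '' (x • s) = (a * x) • s := by
  rw [← smul_smul]
  rfl

lemma leftCoset_mul_mem_mul (J : Subgroup G) [J.Normal] {h : G} (hh : h ∈ J) (a b : G) :
    (a * h * b) • (J : Set G) = (a * b) • (J : Set G) := by
  rw [leftCoset_eq_iff]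
  have hconj : b⁻¹ * h⁻¹ * b⁻¹⁻¹ ∈ J := Subgroup.Normal.conj_mem ‹_› _ (inv_mem hh) b⁻¹
  simpa [mul_assoc] using hconj

/-- Conjugation by `λ(x)` carries the `P`-orbit of `1` onto the `P`-orbit of `x`. -/
lemma orbit_eq_leftCoset {P : Subgroup (Equiv.Perm G)} {J : Subgroup G}
    (hP : ∀ g : G, ∀ q ∈ P, Equiv.mulLeft g * q * (Equiv.mulLeft g)⁻¹ ∈ P)
    (hJ : (fun q : Equiv.Perm G => q 1) '' (P : Set (Equiv.Perm G)) = (J : Set G)) (x : G) :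
    orbit P x = x • (J : Set G) := by
  ext y
  rw [mem_leftCoset_iff, ← hJ]
  simp only [mem_orbit_iff, Subtype.exists, Subgroup.mk_smul, Equiv.Perm.smul_def, Set.mem_image,
    SetLike.mem_coe]
  constructor
  · rintro ⟨p, hp, rfl⟩
    exact ⟨_, hP x⁻¹ p hp, by simp⟩
  · rintro ⟨q, hq, hqy⟩
    exact ⟨_, hP x q hq, by simp [hqy]⟩

end LeftCoset

theorem stmt_9_general {G : Type*} [Group G] (J : Subgroup G) [J.Normal]
    (N P : Subgroup (Equiv.Perm G))
    (hnormal : ∀ n ∈ N, ∀ q ∈ P, n * q * n⁻¹ ∈ P)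
    (hP : ∀ g : G, ∀ q ∈ P, Equiv.mulLeft g * q * (Equiv.mulLeft g)⁻¹ ∈ P)
    (hJ : (fun q : Equiv.Perm G => q 1) '' (P : Set (Equiv.Perm G)) = (J : Set G)) :
    ∀ γ : G, ∀ h₁ ∈ J, ∀ h₂ ∈ J, ∀ n ∈ N, ∀ q ∈ P, ∀ g : G,
      (⇑(Equiv.mulLeft (γ * h₁) * n * q * Equiv.mulLeft (γ⁻¹ * h₂))) ''
          ((fun x => g * x) '' (J : Set G)) =
        (fun x => (γ * n (γ⁻¹ * g)) * x) '' (J : Set G) := by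
  intro γ h₁ hh₁ h₂ hh₂ n hn q hq g
  have hcoset := orbit_eq_leftCoset hP hJ
  change _ '' (g • (J : Set G)) = (γ * n (γ⁻¹ * g)) • (J : Set G)
  simp only [Equiv.Perm.coe_mul, Set.image_comp]
  rw [image_mulLeft_leftCoset, leftCoset_mul_mem_mul J hh₂, ← hcoset,
    Equiv.Perm.image_orbit_of_mem hq, Equiv.Perm.image_orbit_of_forall_conj_mem hnormal hn,
    hcoset, image_mulLeft_leftCoset, leftCoset_mul_mem_mul J hh₁ γ]

/-- With `J ⊴ G` normal, `N ≤ Perm(G)` regular normalized by `λ(G)`, `P ⊴ N` normalized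
by `λ(G)` with `Orb_P(1) = J`: for all `γ ∈ G`, `h₁, h₂ ∈ J`, `n ∈ N`, `q ∈ P`, the
permutation `λ(γh₁) ∘ n ∘ q ∘ λ(γ⁻¹h₂)` sends each left coset `gJ` to `γ·n(γ⁻¹g)·J`. -/
theorem stmt_9 {G : Type*} [Group G] [Finite G] (J : Subgroup G) [J.Normal]
    (N P : Subgroup (Equiv.Perm G))
    (htrans : ∀ x y : G, ∃ n ∈ N, n x = y)
    (hfree : ∀ n ∈ N, ∀ x : G, n x = x → n = 1)
    (hN : ∀ g : G, ∀ n ∈ N, Equiv.mulLeft g * n * (Equiv.mulLeft g)⁻¹ ∈ N)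
    (hPN : P ≤ N) (hnormal : ∀ n ∈ N, ∀ q ∈ P, n * q * n⁻¹ ∈ P)
    (hP : ∀ g : G, ∀ q ∈ P, Equiv.mulLeft g * q * (Equiv.mulLeft g)⁻¹ ∈ P)
    (hJ : (fun q : Equiv.Perm G => q 1) '' (P : Set (Equiv.Perm G)) = (J : Set G)) :
    ∀ γ : G, ∀ h₁ ∈ J, ∀ h₂ ∈ J, ∀ n ∈ N, ∀ q ∈ P, ∀ g : G,
      (⇑(Equiv.mulLeft (γ * h₁) * n * q * Equiv.mulLeft (γ⁻¹ * h₂))) ''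
          ((fun x => g * x) '' (J : Set G)) =
        (fun x => (γ * n (γ⁻¹ * g)) * x) '' (J : Set G) :=
  stmt_9_general J N P hnormal hP hJ
end

section
/- Let G be a finite group and N ≤ Perm(G) a regular subgroup normalized by λ(G). Suppose |G| = mp with p prime, gcd(p, m) = 1, and p > m. Then the Sylow p-subgroup P of N is unique (hence characteristic in N and normalized by λ(G)), and Orb_P(1_G) is the unique Sylow p-subgroup of G, which is therefore normal in G. -/
/-!
The number of Sylow `p`-subgroups of a group of order `m p` with `m < p` is `≡ 1 mod p`, hence
prime to `p`, so it divides `m < p` and equals `1`; as `p ∤ m`, that Sylow subgroup is the only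
subgroup of order `p`. A subgroup that is unique of its order inside `N` is preserved by every
conjugation preserving `N`. Regularity makes `n ↦ n 1` a bijection `N → G`, so this applies to `N`
and gives `P` normalized by `λ(G)`. Then `P 1` is closed under multiplication, has `p` elements by
semiregularity, and so is the unique subgroup of order `p` of `G`.
-/

section SylowUnique

variable {H : Type*} [Group H] [Finite H] {m p : ℕ} [Fact p.Prime]

theorem card_sylow_eq_one_of_card_eq_mul (hcard : Nat.card H = m * p) (hpm : m < p) :
    Nat.card (Sylow p H) = 1 := by
  obtain ⟨P⟩ : Nonempty (Sylow p H) := inferInstance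
  have hmod : Nat.card (Sylow p H) ≡ 1 [MOD p] := card_sylow_modEq_one p H
  have hcop : (Nat.card (Sylow p H)).Coprime p :=
    hmod.gcd_eq.trans (Nat.coprime_one_left p)
  have hdvd : Nat.card (Sylow p H) ∣ m := by
    refine hcop.dvd_of_dvd_mul_right ?_
    exact hcard ▸ P.card_dvd_index.trans (P : Subgroup H).index_dvd_card
  have hm : 0 < m := Nat.pos_of_mul_pos_right (hcard ▸ Nat.card_pos)
  have hlt : Nat.card (Sylow p H) < p := (Nat.le_of_dvd hm hdvd).trans_lt hpm
  rwa [Nat.ModEq, Nat.mod_eq_of_lt hlt, Nat.mod_eq_of_lt (Fact.out : p.Prime).one_lt] at hmod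

theorem existsUnique_subgroup_card_eq_prime (hcard : Nat.card H = m * p)
    (hcop : p.Coprime m) (hpm : m < p) : ∃! P : Subgroup H, Nat.card P = p := by
  have : Subsingleton (Sylow p H) :=
    (Nat.card_eq_one_iff_unique.mp (card_sylow_eq_one_of_card_eq_mul hcard hpm)).1
  obtain ⟨P⟩ : Nonempty (Sylow p H) := inferInstance
  have hP : Nat.card P = p := by
    have hp : p.Prime := Fact.out
    rw [P.card_eq_multiplicity, hcard, Nat.factorization_mul_apply_of_coprime hcop.symm,
      Nat.factorization_eq_zero_of_not_dvd ((Nat.Prime.coprime_iff_not_dvd hp).mp hcop),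
      hp.factorization_self, zero_add, pow_one]
  refine ⟨P, hP, fun Q hQ => ?_⟩
  obtain ⟨R, hQR⟩ := (IsPGroup.of_card (n := 1) (by rw [hQ, pow_one])).exists_le_sylow
  rw [Subsingleton.elim R P] at hQR
  exact Subgroup.eq_of_le_of_card_ge hQR (hQ ▸ hP.le)

end SylowUnique

namespace Subgroup

variable {K : Type*} [Group K]

theorem existsUnique_le_card_eq (N : Subgroup K) {n : ℕ}
    (h : ∃! P : Subgroup N, Nat.card P = n) : ∃! P : Subgroup K, P ≤ N ∧ Nat.card P = n := by
  obtain ⟨P, hP, huniq⟩ := h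
  refine ⟨P.map N.subtype, ⟨map_subtype_le P, ?_⟩, fun Q ⟨hQN, hQ⟩ => ?_⟩
  · rwa [card_map_of_injective N.subtype_injective]
  · have hQ' : Nat.card (Q.subgroupOf N) = n := by
      rw [Nat.card_congr (subgroupOfEquivOfLe hQN).toEquiv, hQ]
    rw [← huniq _ hQ', subgroupOf_map_subtype, inf_eq_left.mpr hQN]

theorem conj_mem_of_unique_card_le {N P : Subgroup K} (hPN : P ≤ N)
    (huniq : ∀ Q : Subgroup K, Q ≤ N → Nat.card Q = Nat.card P → Q = P) {k : K}
    (hk : ∀ n ∈ N, k * n * k⁻¹ ∈ N) {q : K} (hq : q ∈ P) : k * q * k⁻¹ ∈ P := by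
  let c := (MulAut.conj k).toMonoidHom
  have hmapN : P.map c ≤ N := by
    rintro _ ⟨r, hr, rfl⟩
    exact hk r (hPN hr)
  have hmap : P.map c = P :=
    huniq _ hmapN (card_map_of_injective (MulAut.conj k).injective)
  exact hmap ▸ mem_map_of_mem c hq

theorem normal_of_unique_card {P : Subgroup K}
    (huniq : ∀ Q : Subgroup K, Nat.card Q = Nat.card P → Q = P) : P.Normal :=
  ⟨fun _ hq _ => conj_mem_of_unique_card_le le_top (fun Q _ => huniq Q)
    (fun _ _ => mem_top _) hq⟩

end Subgroup

section Regular

variable {X : Type*} {N : Subgroup (Equiv.Perm X)}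

theorem injOn_apply_of_fixed_eq_one (hfree : ∀ n ∈ N, ∀ x : X, n x = x → n = 1) (x : X) :
    Set.InjOn (fun n : Equiv.Perm X => n x) N := by
  intro a ha b hb (hab : a x = b x)
  have hfix : (b⁻¹ * a) x = x := by
    rw [Equiv.Perm.mul_apply, hab]
    exact b.symm_apply_apply x
  exact (inv_mul_eq_one.mp (hfree _ (N.mul_mem (N.inv_mem hb) ha) x hfix)).symm

theorem card_eq_of_regular (htrans : ∀ x y : X, ∃ n ∈ N, n x = y)
    (hfree : ∀ n ∈ N, ∀ x : X, n x = x → n = 1) (x : X) : Nat.card N = Nat.card X := by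
  have himage : (fun n : Equiv.Perm X => n x) '' N = Set.univ :=
    Set.eq_univ_of_forall fun y => htrans x y
  rw [← SetLike.coe_sort_coe, ← Nat.card_image_of_injOn (injOn_apply_of_fixed_eq_one hfree x),
    himage, Nat.card_univ]

end Regular

section OrbitSubgroup

variable {G : Type*} [Group G]

/-- Closed under multiplication because `q 1 * q' 1 = (λ(q 1) * q' * λ(q 1)⁻¹ * q) 1`. -/
def orbitSubgroup (P : Subgroup (Equiv.Perm G))
    (hP : ∀ g : G, ∀ q ∈ P, Equiv.mulLeft g * q * (Equiv.mulLeft g)⁻¹ ∈ P) : Subgroup G where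
  carrier := (fun q : Equiv.Perm G => q 1) '' P
  one_mem' := ⟨1, P.one_mem, rfl⟩
  mul_mem' := by
    rintro _ _ ⟨q, hq, rfl⟩ ⟨q', hq', rfl⟩
    exact ⟨Equiv.mulLeft (q 1) * q' * (Equiv.mulLeft (q 1))⁻¹ * q, P.mul_mem (hP _ q' hq') hq,
      by simp [Equiv.Perm.mul_apply]⟩
  inv_mem' := by
    rintro _ ⟨q, hq, rfl⟩
    exact ⟨Equiv.mulLeft (q 1)⁻¹ * q⁻¹ * (Equiv.mulLeft (q 1)⁻¹)⁻¹, hP _ q⁻¹ (P.inv_mem hq),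
      by simp [Equiv.Perm.mul_apply]⟩

theorem card_orbitSubgroup {P : Subgroup (Equiv.Perm G)}
    (hP : ∀ g : G, ∀ q ∈ P, Equiv.mulLeft g * q * (Equiv.mulLeft g)⁻¹ ∈ P)
    (hinj : Set.InjOn (fun q : Equiv.Perm G => q 1) P) :
    Nat.card (orbitSubgroup P hP) = Nat.card P :=
  Nat.card_image_of_injOn hinj

end OrbitSubgroup

/-- If `|G| = m·p` with `p` prime, `gcd(p,m) = 1` and `p > m`, and `N ≤ Perm(G)` is a
regular subgroup normalized by `λ(G)`, then `N` has a unique Sylow `p`-subgroup `P`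
(hence characteristic, hence normalized by `λ(G)`), and `Orb_P(1)` is the unique Sylow
`p`-subgroup `J` of `G`, which is therefore normal in `G`. -/
theorem stmt_16 {G : Type*} [Group G] [Finite G] {m p : ℕ} (hp : p.Prime)
    (hcard : Nat.card G = m * p) (hcop : Nat.Coprime p m) (hpm : m < p)
    (N : Subgroup (Equiv.Perm G))
    (htrans : ∀ x y : G, ∃ n ∈ N, n x = y)
    (hfree : ∀ n ∈ N, ∀ x : G, n x = x → n = 1)
    (hN : ∀ g : G, ∀ n ∈ N, Equiv.mulLeft g * n * (Equiv.mulLeft g)⁻¹ ∈ N) :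
    ∃ P : Subgroup (Equiv.Perm G), P ≤ N ∧ Nat.card P = p ∧
      (∀ Q : Subgroup (Equiv.Perm G), Q ≤ N → Nat.card Q = p → Q = P) ∧
      (∀ g : G, ∀ q ∈ P, Equiv.mulLeft g * q * (Equiv.mulLeft g)⁻¹ ∈ P) ∧
      ∃ J : Subgroup G,
        (J : Set G) = (fun q : Equiv.Perm G => q 1) '' (P : Set (Equiv.Perm G)) ∧
        Nat.card J = p ∧ (∀ J' : Subgroup G, Nat.card J' = p → J' = J) ∧ J.Normal := by
  have : Fact p.Prime := ⟨hp⟩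
  have hcardN : Nat.card N = m * p := card_eq_of_regular htrans hfree 1 ▸ hcard
  obtain ⟨P, ⟨hPN, hPcard⟩, hPuniq⟩ :=
    N.existsUnique_le_card_eq (existsUnique_subgroup_card_eq_prime hcardN hcop hpm)
  have hPconj : ∀ g : G, ∀ q ∈ P, Equiv.mulLeft g * q * (Equiv.mulLeft g)⁻¹ ∈ P :=
    fun g _ hq => Subgroup.conj_mem_of_unique_card_le hPN
      (fun Q hQN hQ => hPuniq Q ⟨hQN, hQ.trans hPcard⟩) (hN g) hq
  have hJcard : Nat.card (orbitSubgroup P hPconj) = p :=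
    (card_orbitSubgroup hPconj ((injOn_apply_of_fixed_eq_one hfree 1).mono hPN)).trans hPcard
  obtain ⟨J, hJ, hJuniq⟩ := existsUnique_subgroup_card_eq_prime hcard hcop hpm
  obtain rfl := hJuniq _ hJcard
  refine ⟨P, hPN, hPcard, fun Q hQN hQ => hPuniq Q ⟨hQN, hQ⟩, hPconj, orbitSubgroup P hPconj, rfl,
    hJ, hJuniq, Subgroup.normal_of_unique_card fun Q hQ => hJuniq Q (hQ.trans hJ)⟩
end
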